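/- Let g ≥ 1, let x_1 < x_2 < … < x_n be real numbers, and let s = (s_1,…,s_n) with each s_i ∈ {−1,0,1} satisfy ch(s) ≥ g. Then there exists a non-zero real solution h = (h_1,…,h_n) of the dual Vandermonde system ∑_{i=1}^n x_i^k h_i = 0 (k = 0,…,g−1) such that sign(h_i) = s_i for every i = 1,…,n. -/

import Mathlib

/-!
Since `s` has `g` sign changes, there are indices `c₀ < ⋯ < c_g` at which `s` is nonzero and
alternates in sign. Laplace expansion of a Vandermonde matrix with a repeated column shows that
the alternating cofactors `(-1)ʲ det V(x_{c₀}, …, x̂_{c_j}, …, x_{c_g})` solve the dual system;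
Vandermonde determinants of increasing points are positive, so a multiple `h₀` of this solution
has the signs of `s` on the chain and vanishes elsewhere. The Vandermonde system at
`c₁, …, c_g` is invertible, which gives a solution `w` equal to `s` outside `c₁, …, c_g`.
For large `t`, the solution `t • h₀ + w` has the sign pattern `s`.
-/

/-- The number of sign changes of a finite sequence `h : Fin n → ℝ`:
the number of pairs `i < j` with `h i * h j < 0` and `h k = 0` for all `i < k < j`. -/
noncomputable def signChanges {n : ℕ} (h : Fin n → ℝ) : ℕ :=
  Set.ncard {p : Fin n × Fin n | p.1 < p.2 ∧ h p.1 * h p.2 < 0 ∧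
    ∀ k : Fin n, p.1 < k → k < p.2 → h k = 0}

open Finset Filter Function Matrix

section Vandermonde

variable {R : Type*} [CommRing R]

theorem sum_pow_mul_neg_one_pow_mul_det_vandermonde_succAbove {m : ℕ} (y : Fin (m + 1) → R)
    {k : ℕ} (hk : k < m) :
    ∑ j, y j ^ k * ((-1) ^ (j : ℕ) * det (vandermonde (y ∘ j.succAbove))) = 0 := by
  -- Expand `[y ^ k | y ^ 0 | ⋯ | y ^ (m - 1)]`, whose first column reappears, along that column.
  let M : Matrix (Fin (m + 1)) (Fin (m + 1)) R :=
    of fun i => Fin.cons (y i ^ k) fun l : Fin m => y i ^ (l : ℕ)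
  have hM : det M = 0 := det_zero_of_column_eq (i := 0) (j := Fin.succ ⟨k, hk⟩)
    (by simp) fun i => by simp only [M, of_apply, Fin.cons_zero, Fin.cons_succ]
  rw [det_succ_column_zero] at hM
  rw [← hM]
  refine sum_congr rfl fun j _ => ?_
  have hminor : M.submatrix j.succAbove Fin.succ = vandermonde (y ∘ j.succAbove) := by
    ext a b
    simp [M, vandermonde_apply]
  rw [hminor]
  simp only [M, of_apply, Fin.cons_zero]
  ring

theorem det_vandermonde_pos [LinearOrder R] [IsStrictOrderedRing R] {n : ℕ} {v : Fin n → R}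
    (hv : StrictMono v) : 0 < det (vandermonde v) := by
  rw [det_vandermonde]
  exact prod_pos fun i _ => prod_pos fun j hj => sub_pos.2 (hv (mem_Ioi.1 hj))

end Vandermonde

theorem sum_mul_extend_zero {ι κ R : Type*} [Fintype ι] [Fintype κ] [NonUnitalNonAssocSemiring R]
    {e : κ → ι} (he : Injective e) (f : ι → R) (u : κ → R) :
    ∑ i, f i * extend e u 0 i = ∑ j, f (e j) * u j :=
  (Fintype.sum_of_injective e he _ _
    (fun i hi => by rw [extend_apply' _ _ _ (by simpa using hi), Pi.zero_apply, mul_zero])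
    fun j => by rw [he.extend_apply]).symm

section DualVandermonde

variable {ι K : Type*} [Fintype ι] [Field K]

def dualVandermondeKernel (x : ι → K) (g : ℕ) : Submodule K (ι → K) :=
  LinearMap.ker (of fun (k : Fin g) i => x i ^ (k : ℕ)).mulVecLin

theorem mem_dualVandermondeKernel {x : ι → K} {g : ℕ} {h : ι → K} :
    h ∈ dualVandermondeKernel x g ↔ ∀ k < g, ∑ i, x i ^ k * h i = 0 := by
  simp [dualVandermondeKernel, funext_iff, mulVec, dotProduct, Fin.forall_iff]

theorem exists_mem_dualVandermondeKernel_eqOn_compl_range {x : ι → K} {g : ℕ} {e : Fin g → ι}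
    (he : Injective (x ∘ e)) (d : ι → K) :
    ∃ w ∈ dualVandermondeKernel x g, ∀ i ∉ Set.range e, w i = d i := by
  let A : Matrix (Fin g) ι K := of fun k i => x i ^ (k : ℕ)
  have hV : IsUnit (vandermonde (x ∘ e))ᵀ := by
    rw [isUnit_iff_isUnit_det, det_transpose]
    exact (det_vandermonde_ne_zero_iff.2 he).isUnit
  obtain ⟨u, hu⟩ := mulVec_surjective_iff_isUnit.2 hV (-(A *ᵥ d))
  refine ⟨d + extend e u 0, ?_, fun i hi => ?_⟩
  · have hAu : A *ᵥ extend e u 0 = (vandermonde (x ∘ e))ᵀ *ᵥ u := by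
      ext k
      simp [A, mulVec, dotProduct, sum_mul_extend_zero he.of_comp, vandermonde_apply]
    simp [dualVandermondeKernel, A, mulVec_add, hAu, hu]
  · rw [Pi.add_apply, extend_apply' _ _ _ (by simpa using hi), Pi.zero_apply, add_zero]

end DualVandermonde

theorem Real.sign_eq_self {a : ℝ} (ha : a = -1 ∨ a = 0 ∨ a = 1) : Real.sign a = a := by
  rcases ha with rfl | rfl | rfl
  exacts [Real.sign_of_neg (by norm_num), Real.sign_zero, Real.sign_of_pos (by norm_num)]

theorem Real.sign_mul_of_pos {a b : ℝ} (hb : 0 < b) : Real.sign (a * b) = Real.sign a := by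
  rcases lt_trichotomy a 0 with ha | rfl | ha
  · rw [Real.sign_of_neg (mul_neg_of_neg_of_pos ha hb), Real.sign_of_neg ha]
  · rw [zero_mul]
  · rw [Real.sign_of_pos (mul_pos ha hb), Real.sign_of_pos ha]

theorem Real.eq_neg_of_mul_neg_of_sign_eq_self {a b : ℝ} (ha : Real.sign a = a)
    (hb : Real.sign b = b) (h : a * b < 0) : b = -a := by
  rw [← ha, ← hb]
  rcases mul_neg_iff.1 h with ⟨ha', hb'⟩ | ⟨ha', hb'⟩
  · rw [Real.sign_of_pos ha', Real.sign_of_neg hb']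
  · rw [Real.sign_of_neg ha', Real.sign_of_pos hb', neg_neg]

theorem mul_neg_of_pos_of_mul_neg {R : Type*} [CommRing R] [LinearOrder R] [IsStrictOrderedRing R]
    {a b c : R} (hab : 0 < a * b) (hbc : b * c < 0) : a * c < 0 :=
  Left.neg_of_mul_neg_left (b := b * b)
    (by linarith [mul_neg_of_pos_of_neg hab hbc, show a * c * (b * b) = a * b * (b * c) by ring])
    (mul_self_nonneg b)

theorem eventually_sign_mul_add_eq {a : ℝ} (ha : a ≠ 0) (b : ℝ) :
    ∀ᶠ t in atTop, Real.sign (t * a + b) = Real.sign a := by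
  rcases ha.lt_or_gt with ha | ha
  · filter_upwards [(tendsto_atBot_add_const_right _ b
      (tendsto_id.atTop_mul_const_of_neg ha)).eventually_lt_atBot 0] with t ht
    exact (Real.sign_of_neg ht).trans (Real.sign_of_neg ha).symm
  · filter_upwards [(tendsto_atTop_add_const_right _ b
      (tendsto_id.atTop_mul_const ha)).eventually_gt_atTop 0] with t ht
    exact (Real.sign_of_pos ht).trans (Real.sign_of_pos ha).symm

theorem exists_mem_forall_sign_eq {ι : Type*} [Finite ι] (V : Submodule ℝ (ι → ℝ))
    {h₀ w s : ι → ℝ} (h₀V : h₀ ∈ V) (hwV : w ∈ V)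
    (hw : ∀ i, h₀ i = 0 → Real.sign (w i) = s i) (h₀s : ∀ i, h₀ i ≠ 0 → Real.sign (h₀ i) = s i) :
    ∃ h ∈ V, ∀ i, Real.sign (h i) = s i := by
  have : ∀ᶠ t in atTop, ∀ i, Real.sign (t * h₀ i + w i) = s i := by
    refine eventually_all.2 fun i => ?_
    by_cases hi : h₀ i = 0
    · exact Eventually.of_forall fun t => by rw [hi, mul_zero, zero_add, hw i hi]
    · exact (eventually_sign_mul_add_eq hi (w i)).mono fun t ht => ht.trans (h₀s i hi)
  obtain ⟨t, ht⟩ := this.exists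
  exact ⟨t • h₀ + w, V.add_mem (V.smul_mem t h₀V) hwV, ht⟩

theorem eq_neg_one_pow_mul_of_succ_eq_neg {R : Type*} [Ring R] {m : ℕ} {f : Fin (m + 1) → R}
    (hf : ∀ j : Fin m, f j.succ = -f j.castSucc) (j : Fin (m + 1)) :
    f j = (-1) ^ (j : ℕ) * f 0 := by
  induction j using Fin.induction with
  | zero => simp
  | succ j ih => simp [hf, ih, pow_succ]

theorem exists_mem_dualVandermondeKernel_sign_eq {ι : Type*} [Fintype ι] {x : ι → ℝ} {g : ℕ}
    {c : Fin (g + 1) → ι} (hxc : StrictMono (x ∘ c)) {σ : Fin (g + 1) → ℝ}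
    (hσ : ∀ j, σ j = (-1) ^ (j : ℕ) * σ 0) :
    ∃ h ∈ dualVandermondeKernel x g,
      (∀ i ∉ Set.range c, h i = 0) ∧ ∀ j, Real.sign (h (c j)) = Real.sign (σ j) := by
  have hc : Injective c := hxc.injective.of_comp
  refine ⟨extend c (fun j => σ j * det (vandermonde ((x ∘ c) ∘ j.succAbove))) 0,
    mem_dualVandermondeKernel.2 fun k hk => ?_,
    fun i hi => by rw [extend_apply' _ _ _ (by simpa using hi), Pi.zero_apply], fun j => ?_⟩
  · rw [sum_mul_extend_zero hc, ← mul_zero (σ 0),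
      ← sum_pow_mul_neg_one_pow_mul_det_vandermonde_succAbove (x ∘ c) hk, mul_sum]
    refine sum_congr rfl fun j _ => ?_
    rw [hσ j, Function.comp_apply]
    ring
  · rw [hc.extend_apply,
      Real.sign_mul_of_pos (det_vandermonde_pos (hxc.comp (Fin.strictMono_succAbove j)))]

theorem forall_snoc_castSucc_succ {α : Type*} {r : α → α → Prop} {g : ℕ} {c : Fin (g + 1) → α}
    {z : α} (hc : ∀ j : Fin g, r (c j.castSucc) (c j.succ)) (hz : r (c (Fin.last g)) z) :
    ∀ j : Fin (g + 1),
      r (Fin.snoc (α := fun _ => α) c z j.castSucc) (Fin.snoc (α := fun _ => α) c z j.succ) := by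
  refine Fin.lastCases ?_ fun j => ?_
  · simpa using hz
  · rw [Fin.succ_castSucc, Fin.snoc_castSucc, Fin.snoc_castSucc]
    exact hc j

section SignChanges

variable {n : ℕ} {s : Fin n → ℝ}

def IsSignChange (s : Fin n → ℝ) (i j : Fin n) : Prop :=
  i < j ∧ s i * s j < 0 ∧ ∀ k, i < k → k < j → s k = 0

theorem signChanges_eq_ncard (s : Fin n → ℝ) :
    signChanges s = {p : Fin n × Fin n | IsSignChange s p.1 p.2}.ncard :=
  rfl

theorem IsSignChange.le_of_lt {i j k : Fin n} (h : IsSignChange s i j) (hik : i < k)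
    (hk : s k ≠ 0) : j ≤ k :=
  not_lt.1 fun hkj => hk (h.2.2 k hik hkj)

theorem IsSignChange.right_unique {i j j' : Fin n} (h : IsSignChange s i j)
    (h' : IsSignChange s i j') : j = j' :=
  (h.le_of_lt h'.1 (right_ne_zero_of_mul h'.2.1.ne)).antisymm
    (h'.le_of_lt h.1 (right_ne_zero_of_mul h.2.1.ne))

theorem exists_isSignChange_of_mul_neg {u v : Fin n} (huv : u ≤ v) (h : s u * s v < 0) :
    ∃ p q, u ≤ p ∧ q ≤ v ∧ IsSignChange s p q := by
  -- `q` is the first index from `u` on of the sign opposite to `s u`, and `p` the last nonzero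
  -- index before `q`.
  have hu : s u ≠ 0 := left_ne_zero_of_mul h.ne
  obtain ⟨q, ⟨huq, hq⟩, hq_min⟩ :=
    Set.exists_min_image {m | u ≤ m ∧ s u * s m < 0} id (Set.toFinite _) ⟨v, huv, h⟩
  have huq : u < q := huq.lt_of_ne (by rintro rfl; exact (mul_self_nonneg _).not_gt hq)
  obtain ⟨p, ⟨hpq, hp⟩, hp_max⟩ :=
    Set.exists_max_image {r | r < q ∧ s r ≠ 0} id (Set.toFinite _) ⟨u, huq, hu⟩
  have hup : u ≤ p := hp_max u ⟨huq, hu⟩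
  have hpu : 0 < s p * s u := by
    refine (mul_ne_zero hp hu).lt_of_le' (not_lt.1 fun hpu => ?_)
    exact (hq_min p ⟨hup, by rwa [mul_comm]⟩).not_gt hpq
  exact ⟨p, q, hup, hq_min v ⟨huv, h⟩, hpq, mul_neg_of_pos_of_mul_neg hpu hq,
    fun k hpk hkq => by_contra fun hk => (hp_max k ⟨hkq, hk⟩).not_gt hpk⟩

theorem exists_alternating_chain_ending_at : ∀ (g : ℕ) {l : Fin n}, s l ≠ 0 →
    g ≤ {p : Fin n × Fin n | IsSignChange s p.1 p.2 ∧ p.2 ≤ l}.ncard →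
    ∃ c : Fin (g + 1) → Fin n, (∀ j : Fin g,
      c j.castSucc < c j.succ ∧ s (c j.castSucc) * s (c j.succ) < 0) ∧ c (Fin.last g) = l
  | 0, l, _, _ => ⟨fun _ => l, fun j => j.elim0, rfl⟩
  | g + 1, l, hl, hg => by
    -- Drop the sign change `(a, b)` with the largest left end: `s` keeps the sign of `s b` on
    -- `[b, l]`, so the chain ending at `a` given by induction extends by `l`.
    obtain ⟨⟨a, b⟩, hab_mem, hab_max⟩ :=
      Set.exists_max_image {p : Fin n × Fin n | IsSignChange s p.1 p.2 ∧ p.2 ≤ l} Prod.fst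
        (Set.toFinite _) (Set.nonempty_of_ncard_ne_zero (by omega))
    have hab : IsSignChange s a b := hab_mem.1
    have hbl : b ≤ l := hab_mem.2
    have hsa : s a ≠ 0 := left_ne_zero_of_mul hab.2.1.ne
    have hsub : {p : Fin n × Fin n | IsSignChange s p.1 p.2 ∧ p.2 ≤ l} \ {(a, b)} ⊆
        {p | IsSignChange s p.1 p.2 ∧ p.2 ≤ a} := by
      rintro ⟨p, q⟩ ⟨⟨hpq, hql⟩, hne⟩
      dsimp only at hpq hql ⊢
      rcases (hab_max (p, q) ⟨hpq, hql⟩).lt_or_eq with hpa | rfl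
      · exact ⟨hpq, hpq.le_of_lt hpa hsa⟩
      · exact (hne (Set.mem_singleton_iff.2 (by rw [hpq.right_unique hab]))).elim
    have hga : g ≤ {p : Fin n × Fin n | IsSignChange s p.1 p.2 ∧ p.2 ≤ a}.ncard := by
      have := Set.ncard_le_ncard hsub (Set.toFinite _)
      rw [Set.ncard_sdiff_singleton_of_mem hab_mem] at this
      omega
    obtain ⟨c, hc, rfl⟩ := exists_alternating_chain_ending_at g hsa hga
    have hsbl : 0 < s b * s l := by
      refine (mul_ne_zero (right_ne_zero_of_mul hab.2.1.ne) hl).lt_of_le' (not_lt.1 fun hneg => ?_)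
      obtain ⟨p, q, hbp, hql, hpq⟩ := exists_isSignChange_of_mul_neg hbl hneg
      exact (hab_max (p, q) ⟨hpq, hql⟩).not_gt (hab.1.trans_le hbp)
    refine ⟨Fin.snoc c l, forall_snoc_castSucc_succ (r := fun i j => i < j ∧ s i * s j < 0) hc
      ⟨hab.1.trans_le hbl, ?_⟩, Fin.snoc_last _ _⟩
    rw [mul_comm]
    exact mul_neg_of_pos_of_mul_neg (by rwa [mul_comm]) (by rw [mul_comm]; exact hab.2.1)

theorem exists_alternating_chain {g : ℕ} (hs : 0 < signChanges s) (hg : g ≤ signChanges s) :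
    ∃ c : Fin (g + 1) → Fin n, ∀ j : Fin g,
      c j.castSucc < c j.succ ∧ s (c j.castSucc) * s (c j.succ) < 0 := by
  rw [signChanges_eq_ncard] at hs hg
  obtain ⟨⟨a, b⟩, hab, hab_max⟩ := Set.exists_max_image _ Prod.snd (Set.toFinite _)
    (Set.nonempty_of_ncard_ne_zero hs.ne')
  have hall : {p : Fin n × Fin n | IsSignChange s p.1 p.2 ∧ p.2 ≤ b} =
      {p | IsSignChange s p.1 p.2} :=
    Set.ext fun p => and_iff_left_of_imp (hab_max p)
  obtain ⟨c, hc, -⟩ := exists_alternating_chain_ending_at g (right_ne_zero_of_mul hab.2.1.ne)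
    (hall ▸ hg)
  exact ⟨c, hc⟩

end SignChanges

/-- If a `{-1,0,1}`-valued sequence `s` has at least `g` sign changes, then `s` is
the sequence of signs of a nonzero solution of the dual Vandermonde system. -/
theorem exists_nonzero_solution_with_signs (g n : ℕ) (hg : 1 ≤ g)
    (x : Fin n → ℝ) (hx : StrictMono x)
    (s : Fin n → ℝ) (hs : ∀ i, s i = -1 ∨ s i = 0 ∨ s i = 1)
    (hch : g ≤ signChanges s) :
    ∃ h : Fin n → ℝ, h ≠ 0 ∧ (∀ k, k < g → ∑ i, x i ^ k * h i = 0) ∧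
      ∀ i, Real.sign (h i) = s i := by
  replace hs : ∀ i, Real.sign (s i) = s i := fun i => Real.sign_eq_self (hs i)
  obtain ⟨c, hc⟩ := exists_alternating_chain (by omega) hch
  have hxc : StrictMono (x ∘ c) := hx.comp (Fin.strictMono_iff_lt_succ.2 fun j => (hc j).1)
  have hsc : ∀ j, s (c j) = (-1) ^ (j : ℕ) * s (c 0) := eq_neg_one_pow_mul_of_succ_eq_neg
    fun j => Real.eq_neg_of_mul_neg_of_sign_eq_self (hs _) (hs _) (hc j).2
  obtain ⟨h₀, h₀K, h₀c, h₀sign⟩ := exists_mem_dualVandermondeKernel_sign_eq hxc hsc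
  obtain ⟨w, hwK, hw⟩ := exists_mem_dualVandermondeKernel_eqOn_compl_range (x := x)
    (e := c ∘ Fin.succ) (hxc.comp Fin.strictMono_succ).injective s
  have hw_sign : ∀ i, h₀ i = 0 → Real.sign (w i) = s i := by
    intro i hi
    rw [hw i ?_, hs]
    rintro ⟨j, rfl⟩
    refine right_ne_zero_of_mul (hc j).2.ne ?_
    rw [← hs, ← h₀sign, show h₀ (c j.succ) = 0 from hi, Real.sign_zero]
  have h₀_sign : ∀ i, h₀ i ≠ 0 → Real.sign (h₀ i) = s i := by
    intro i hi
    obtain ⟨j, rfl⟩ : i ∈ Set.range c := by_contra fun hic => hi (h₀c i hic)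
    rw [h₀sign, hs]
  obtain ⟨h, hK, hsign⟩ := exists_mem_forall_sign_eq _ h₀K hwK hw_sign h₀_sign
  refine ⟨h, fun h0 => left_ne_zero_of_mul (hc ⟨0, hg⟩).2.ne ?_, mem_dualVandermondeKernel.1 hK,
    hsign⟩
  rw [← hsign, h0, Pi.zero_apply, Real.sign_zero]
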